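/- arXiv:1907.06969 — 4 statements merged into one kernel-verified Lean document; each statement's English description precedes it below -/
import Mathlib

section
/- Let ε ∈ (0,1), let p₁, p₂, q₁, q₂ ∈ ℝ^d, and let f : ℝ^d → ℝ^{d'} be a map satisfying (1−ε)‖x − y‖ ≤ ‖f(x) − f(y)‖ ≤ (1+ε)‖x − y‖ for all x, y ∈ {p₁, p₂, q₁, q₂}. For any λ_p, λ_q ∈ [0,1], set p := (1−λ_p)p₁ + λ_p p₂, p′ := (1−λ_p)f(p₁) + λ_p f(p₂), q := (1−λ_q)q₁ + λ_q q₂, and q′ := (1−λ_q)f(q₁) + λ_q f(q₂). Then (1−ε)²‖p − q‖² − ε(‖p₁ − p₂‖² + ‖q₁ − q₂‖²) ≤ ‖p′ − q′‖² ≤ (1+ε)²‖p − q‖² + ε(‖p₁ − p₂‖² + ‖q₁ − q₂‖²). -/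
set_option maxHeartbeats 800000

open scoped RealInnerProductSpace

lemma seg_norm_sq {E : Type*} [NormedAddCommGroup E] [InnerProductSpace ℝ E]
    (a b c d : E) (s t : ℝ) :
    ‖((1 - s) • a + s • b) - ((1 - t) • c + t • d)‖ ^ 2
      = (1 - s) * (1 - t) * ‖a - c‖ ^ 2 + (1 - s) * t * ‖a - d‖ ^ 2
        + s * (1 - t) * ‖b - c‖ ^ 2 + s * t * ‖b - d‖ ^ 2
        - s * (1 - s) * ‖a - b‖ ^ 2 - t * (1 - t) * ‖c - d‖ ^ 2 := by
  simp only [← real_inner_self_eq_norm_sq]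
  simp only [inner_sub_left, inner_sub_right, inner_add_left, inner_add_right,
    real_inner_smul_left, real_inner_smul_right]
  rw [real_inner_comm b a, real_inner_comm c a, real_inner_comm c b,
    real_inner_comm d a, real_inner_comm d b, real_inner_comm d c]
  ring

lemma sq_bounds {ε A B : ℝ} (hε1 : ε < 1) (hA : 0 ≤ A) (hB : 0 ≤ B)
    (h1 : (1 - ε) * A ≤ B) (h2 : B ≤ (1 + ε) * A) :
    (1 - ε) ^ 2 * A ^ 2 ≤ B ^ 2 ∧ B ^ 2 ≤ (1 + ε) ^ 2 * A ^ 2 := by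
  constructor <;> nlinarith [mul_le_mul h1 h1 (by nlinarith) hB,
    mul_le_mul h2 h2 hB (by nlinarith)]

lemma jl_scalar (ε lp lq N11 N12 N21 N22 NP NQ F11 F12 F21 F22 FP FQ : ℝ)
    (hε0 : 0 < ε) (hlp0 : 0 ≤ lp) (hlp1 : lp ≤ 1) (hlq0 : 0 ≤ lq) (hlq1 : lq ≤ 1)
    (nP : 0 ≤ NP) (nQ : 0 ≤ NQ)
    (h11l : (1 - ε) ^ 2 * N11 ≤ F11) (h11u : F11 ≤ (1 + ε) ^ 2 * N11)
    (h12l : (1 - ε) ^ 2 * N12 ≤ F12) (h12u : F12 ≤ (1 + ε) ^ 2 * N12)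
    (h21l : (1 - ε) ^ 2 * N21 ≤ F21) (h21u : F21 ≤ (1 + ε) ^ 2 * N21)
    (h22l : (1 - ε) ^ 2 * N22 ≤ F22) (h22u : F22 ≤ (1 + ε) ^ 2 * N22)
    (hPl : (1 - ε) ^ 2 * NP ≤ FP) (hPu : FP ≤ (1 + ε) ^ 2 * NP)
    (hQl : (1 - ε) ^ 2 * NQ ≤ FQ) (hQu : FQ ≤ (1 + ε) ^ 2 * NQ) :
    (1 - ε) ^ 2 * ((1 - lp) * (1 - lq) * N11 + (1 - lp) * lq * N12
        + lp * (1 - lq) * N21 + lp * lq * N22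
        - lp * (1 - lp) * NP - lq * (1 - lq) * NQ) - ε * (NP + NQ)
      ≤ (1 - lp) * (1 - lq) * F11 + (1 - lp) * lq * F12
        + lp * (1 - lq) * F21 + lp * lq * F22
        - lp * (1 - lp) * FP - lq * (1 - lq) * FQ ∧
    (1 - lp) * (1 - lq) * F11 + (1 - lp) * lq * F12
        + lp * (1 - lq) * F21 + lp * lq * F22
        - lp * (1 - lp) * FP - lq * (1 - lq) * FQ
      ≤ (1 + ε) ^ 2 * ((1 - lp) * (1 - lq) * N11 + (1 - lp) * lq * N12
        + lp * (1 - lq) * N21 + lp * lq * N22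
        - lp * (1 - lp) * NP - lq * (1 - lq) * NQ) + ε * (NP + NQ) := by
  have c11 : (0:ℝ) ≤ (1 - lp) * (1 - lq) := mul_nonneg (by linarith) (by linarith)
  have c12 : (0:ℝ) ≤ (1 - lp) * lq := mul_nonneg (by linarith) hlq0
  have c21 : (0:ℝ) ≤ lp * (1 - lq) := mul_nonneg hlp0 (by linarith)
  have c22 : (0:ℝ) ≤ lp * lq := mul_nonneg hlp0 hlq0
  have sp0 : (0:ℝ) ≤ lp * (1 - lp) := mul_nonneg hlp0 (by linarith)
  have sp4 : lp * (1 - lp) ≤ 1 / 4 := by nlinarith [sq_nonneg (lp - 1/2)]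
  have sq0 : (0:ℝ) ≤ lq * (1 - lq) := mul_nonneg hlq0 (by linarith)
  have sq4 : lq * (1 - lq) ≤ 1 / 4 := by nlinarith [sq_nonneg (lq - 1/2)]
  constructor
  · linarith [mul_le_mul_of_nonneg_left h11l c11, mul_le_mul_of_nonneg_left h12l c12,
      mul_le_mul_of_nonneg_left h21l c21, mul_le_mul_of_nonneg_left h22l c22,
      mul_le_mul_of_nonneg_left hPu sp0, mul_le_mul_of_nonneg_left hQu sq0,
      mul_nonneg (mul_nonneg hε0.le nP) (by linarith : (0:ℝ) ≤ 1 - 4 * (lp * (1 - lp))),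
      mul_nonneg (mul_nonneg hε0.le nQ) (by linarith : (0:ℝ) ≤ 1 - 4 * (lq * (1 - lq)))]
  · linarith [mul_le_mul_of_nonneg_left h11u c11, mul_le_mul_of_nonneg_left h12u c12,
      mul_le_mul_of_nonneg_left h21u c21, mul_le_mul_of_nonneg_left h22u c22,
      mul_le_mul_of_nonneg_left hPl sp0, mul_le_mul_of_nonneg_left hQl sq0,
      mul_nonneg (mul_nonneg hε0.le nP) (by linarith : (0:ℝ) ≤ 1 - 4 * (lp * (1 - lp))),
      mul_nonneg (mul_nonneg hε0.le nQ) (by linarith : (0:ℝ) ≤ 1 - 4 * (lq * (1 - lq)))]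

/-- If `f` distorts all pairwise distances among `{p₁,p₂,q₁,q₂}` by at most a
`(1±ε)` factor, then for points `p, q` at parameters `λ_p, λ_q` on the segments `p₁p₂`, `q₁q₂`
and their images `p′, q′` at the same parameters on the segments `f(p₁)f(p₂)`, `f(q₁)f(q₂)`,
`(1-ε)²‖p-q‖² - ε(‖p₁-p₂‖² + ‖q₁-q₂‖²) ≤ ‖p′-q′‖² ≤ (1+ε)²‖p-q‖² + ε(‖p₁-p₂‖² + ‖q₁-q₂‖²)`. -/
theorem jl_segment_distortion {d d' : ℕ} (ε : ℝ) (hε0 : 0 < ε) (hε1 : ε < 1)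
    (p₁ p₂ q₁ q₂ : EuclideanSpace ℝ (Fin d))
    (f : EuclideanSpace ℝ (Fin d) → EuclideanSpace ℝ (Fin d'))
    (hf : ∀ x ∈ ({p₁, p₂, q₁, q₂} : Set (EuclideanSpace ℝ (Fin d))),
          ∀ y ∈ ({p₁, p₂, q₁, q₂} : Set (EuclideanSpace ℝ (Fin d))),
      (1 - ε) * ‖x - y‖ ≤ ‖f x - f y‖ ∧ ‖f x - f y‖ ≤ (1 + ε) * ‖x - y‖)
    (lp lq : ℝ) (hlp : lp ∈ Set.Icc (0 : ℝ) 1) (hlq : lq ∈ Set.Icc (0 : ℝ) 1) :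
    (1 - ε) ^ 2 * ‖((1 - lp) • p₁ + lp • p₂) - ((1 - lq) • q₁ + lq • q₂)‖ ^ 2
        - ε * (‖p₁ - p₂‖ ^ 2 + ‖q₁ - q₂‖ ^ 2)
      ≤ ‖((1 - lp) • f p₁ + lp • f p₂) - ((1 - lq) • f q₁ + lq • f q₂)‖ ^ 2 ∧
    ‖((1 - lp) • f p₁ + lp • f p₂) - ((1 - lq) • f q₁ + lq • f q₂)‖ ^ 2
      ≤ (1 + ε) ^ 2 * ‖((1 - lp) • p₁ + lp • p₂) - ((1 - lq) • q₁ + lq • q₂)‖ ^ 2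
        + ε * (‖p₁ - p₂‖ ^ 2 + ‖q₁ - q₂‖ ^ 2) := by
  obtain ⟨hlp0, hlp1⟩ := hlp
  obtain ⟨hlq0, hlq1⟩ := hlq
  have hmem : ∀ x ∈ ({p₁, p₂, q₁, q₂} : Set (EuclideanSpace ℝ (Fin d))),
      ∀ y ∈ ({p₁, p₂, q₁, q₂} : Set (EuclideanSpace ℝ (Fin d))),
      (1 - ε) ^ 2 * ‖x - y‖ ^ 2 ≤ ‖f x - f y‖ ^ 2 ∧
      ‖f x - f y‖ ^ 2 ≤ (1 + ε) ^ 2 * ‖x - y‖ ^ 2 := by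
    intro x hx y hy
    obtain ⟨h1, h2⟩ := hf x hx y hy
    exact sq_bounds hε1 (norm_nonneg _) (norm_nonneg _) h1 h2
  have m1 : p₁ ∈ ({p₁, p₂, q₁, q₂} : Set (EuclideanSpace ℝ (Fin d))) := by
    left; rfl
  have m2 : p₂ ∈ ({p₁, p₂, q₁, q₂} : Set (EuclideanSpace ℝ (Fin d))) := by
    right; left; rfl
  have m3 : q₁ ∈ ({p₁, p₂, q₁, q₂} : Set (EuclideanSpace ℝ (Fin d))) := by
    right; right; left; rfl
  have m4 : q₂ ∈ ({p₁, p₂, q₁, q₂} : Set (EuclideanSpace ℝ (Fin d))) := by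
    right; right; right; rfl
  obtain ⟨h11l, h11u⟩ := hmem p₁ m1 q₁ m3
  obtain ⟨h12l, h12u⟩ := hmem p₁ m1 q₂ m4
  obtain ⟨h21l, h21u⟩ := hmem p₂ m2 q₁ m3
  obtain ⟨h22l, h22u⟩ := hmem p₂ m2 q₂ m4
  obtain ⟨hPl, hPu⟩ := hmem p₁ m1 p₂ m2
  obtain ⟨hQl, hQu⟩ := hmem q₁ m3 q₂ m4
  rw [seg_norm_sq (f p₁) (f p₂) (f q₁) (f q₂) lp lq, seg_norm_sq p₁ p₂ q₁ q₂ lp lq]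
  exact jl_scalar ε lp lq _ _ _ _ _ _ _ _ _ _ _ _ hε0 hlp0 hlp1 hlq0 hlq1
    (by positivity) (by positivity)
    h11l h11u h12l h12u h21l h21u h22l h22u hPl hPu hQl hQu
end

section
/- Let τ and σ be polygonal curves in ℝ^d with vertex sets V(τ) and V(σ), let ε ∈ (0,1), and let f : ℝ^d → ℝ^{d'} satisfy (1−ε)‖x − y‖ ≤ ‖f(x) − f(y)‖ ≤ (1+ε)‖x − y‖ for all x, y ∈ V(τ) ∪ V(σ). Let F(τ) and F(σ) be the polygonal curves obtained by mapping each vertex through f, keeping the same instants, and linearly interpolating. Let α(τ,σ) be the maximum Euclidean distance between two consecutive vertices of τ or of σ. Then d_F(F(τ), F(σ))² ≤ (1+ε)² d_F(τ, σ)² + 2ε α(τ,σ)². -/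
/-- The (continuous) Fréchet distance between two curves, restricted to the parameter
interval `[0,1]`: the infimum over reparameterizations `h` (continuous bijections of `[0,1]`
fixing the endpoints) of the supremum over `t ∈ [0,1]` of `dist (τ t) (σ (h t))`. -/
noncomputable def frechetDist {X : Type*} [PseudoMetricSpace X] (τ σ : ℝ → X) : ℝ :=
  sInf {r : ℝ | ∃ h : ℝ → ℝ, ContinuousOn h (Set.Icc 0 1) ∧
    Set.BijOn h (Set.Icc 0 1) (Set.Icc 0 1) ∧ h 0 = 0 ∧ h 1 = 1 ∧
    ∀ t ∈ Set.Icc (0 : ℝ) 1, dist (τ t) (σ (h t)) ≤ r}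

/-- `τ` is the polygonal curve with vertices `v` and instants `ts`: on each interval
`[ts i, ts (i+1)]` it linearly interpolates between `v i` and `v (i+1)`. -/
def IsPolyOn {X : Type*} [AddCommGroup X] [Module ℝ X] {m : ℕ}
    (τ : ℝ → X) (v : Fin m → X) (ts : Fin m → ℝ) : Prop :=
  ∀ (i : ℕ) (hi : i + 1 < m), ∀ t : ℝ,
    ts ⟨i, by omega⟩ ≤ t → t ≤ ts ⟨i + 1, hi⟩ →
    τ t = v ⟨i, by omega⟩ +
      ((t - ts ⟨i, by omega⟩) / (ts ⟨i + 1, hi⟩ - ts ⟨i, by omega⟩)) •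
        (v ⟨i + 1, hi⟩ - v ⟨i, by omega⟩)

/-- The maximum distance between two consecutive vertices of a curve with vertices `v`. -/
noncomputable def edgeMax {X : Type*} [PseudoMetricSpace X] {m : ℕ} (v : Fin m → X) : ℝ :=
  sSup {r : ℝ | ∃ (i : ℕ) (hi : i + 1 < m), r = dist (v ⟨i, by omega⟩) (v ⟨i + 1, hi⟩)}

lemma quarter_bound (s : ℝ) (hs0 : 0 ≤ s) (hs1 : s ≤ 1) : s * (1 - s) ≤ 1/4 := by
  nlinarith [sq_nonneg (2*s - 1)]

lemma key_num (ε s u : ℝ) (hε0 : 0 < ε) (hε1 : ε < 1)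
    (hs0 : 0 ≤ s) (hs1 : s ≤ 1) (hu0 : 0 ≤ u) (hu1 : u ≤ 1)
    (nac nae nbc nbe nab nce fac fae fbc fbe fab fce α : ℝ)
    (hnab : 0 ≤ nab) (hnce : 0 ≤ nce)
    (hfac : 0 ≤ fac) (hfae : 0 ≤ fae) (hfbc : 0 ≤ fbc) (hfbe : 0 ≤ fbe)
    (h1 : fac ≤ (1 + ε) * nac) (h2 : fae ≤ (1 + ε) * nae)
    (h3 : fbc ≤ (1 + ε) * nbc) (h4 : fbe ≤ (1 + ε) * nbe)
    (h5 : (1 - ε) * nab ≤ fab) (h6 : (1 - ε) * nce ≤ fce)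
    (hab : nab ≤ α) (hce : nce ≤ α) :
    (1 - s) * (1 - u) * fac ^ 2 + (1 - s) * u * fae ^ 2 +
      s * (1 - u) * fbc ^ 2 + s * u * fbe ^ 2 -
      s * (1 - s) * fab ^ 2 - u * (1 - u) * fce ^ 2 ≤
    (1 + ε) ^ 2 * ((1 - s) * (1 - u) * nac ^ 2 + (1 - s) * u * nae ^ 2 +
      s * (1 - u) * nbc ^ 2 + s * u * nbe ^ 2 -
      s * (1 - s) * nab ^ 2 - u * (1 - u) * nce ^ 2) + 2 * ε * α ^ 2 := by
  have H1 : fac ^ 2 ≤ (1 + ε) ^ 2 * nac ^ 2 := by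
    calc fac ^ 2 ≤ ((1 + ε) * nac) ^ 2 := pow_le_pow_left₀ hfac h1 2
    _ = (1 + ε) ^ 2 * nac ^ 2 := by ring
  have H2 : fae ^ 2 ≤ (1 + ε) ^ 2 * nae ^ 2 := by
    calc fae ^ 2 ≤ ((1 + ε) * nae) ^ 2 := pow_le_pow_left₀ hfae h2 2
    _ = (1 + ε) ^ 2 * nae ^ 2 := by ring
  have H3 : fbc ^ 2 ≤ (1 + ε) ^ 2 * nbc ^ 2 := by
    calc fbc ^ 2 ≤ ((1 + ε) * nbc) ^ 2 := pow_le_pow_left₀ hfbc h3 2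
    _ = (1 + ε) ^ 2 * nbc ^ 2 := by ring
  have H4 : fbe ^ 2 ≤ (1 + ε) ^ 2 * nbe ^ 2 := by
    calc fbe ^ 2 ≤ ((1 + ε) * nbe) ^ 2 := pow_le_pow_left₀ hfbe h4 2
    _ = (1 + ε) ^ 2 * nbe ^ 2 := by ring
  have H5 : (1 - ε) ^ 2 * nab ^ 2 ≤ fab ^ 2 := by
    have h0 : (0:ℝ) ≤ (1 - ε) * nab := mul_nonneg (by linarith) hnab
    calc (1 - ε) ^ 2 * nab ^ 2 = ((1 - ε) * nab) ^ 2 := by ring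
    _ ≤ fab ^ 2 := pow_le_pow_left₀ h0 h5 2
  have H6 : (1 - ε) ^ 2 * nce ^ 2 ≤ fce ^ 2 := by
    have h0 : (0:ℝ) ≤ (1 - ε) * nce := mul_nonneg (by linarith) hnce
    calc (1 - ε) ^ 2 * nce ^ 2 = ((1 - ε) * nce) ^ 2 := by ring
    _ ≤ fce ^ 2 := pow_le_pow_left₀ h0 h6 2
  have Q1 : s * (1 - s) * nab ^ 2 ≤ (1/4) * α ^ 2 := by
    have h14 := quarter_bound s hs0 hs1
    have hn : nab ^ 2 ≤ α ^ 2 := pow_le_pow_left₀ hnab hab 2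
    have := mul_le_mul h14 hn (sq_nonneg _) (by norm_num)
    linarith
  have Q2 : u * (1 - u) * nce ^ 2 ≤ (1/4) * α ^ 2 := by
    have h14 := quarter_bound u hu0 hu1
    have hn : nce ^ 2 ≤ α ^ 2 := pow_le_pow_left₀ hnce hce 2
    have := mul_le_mul h14 hn (sq_nonneg _) (by norm_num)
    linarith
  have c1 : (0:ℝ) ≤ (1 - s) * (1 - u) := mul_nonneg (by linarith) (by linarith)
  have c2 : (0:ℝ) ≤ (1 - s) * u := mul_nonneg (by linarith) hu0
  have c3 : (0:ℝ) ≤ s * (1 - u) := mul_nonneg hs0 (by linarith)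
  have c4 : (0:ℝ) ≤ s * u := mul_nonneg hs0 hu0
  have c5 : (0:ℝ) ≤ s * (1 - s) := mul_nonneg hs0 (by linarith)
  have c6 : (0:ℝ) ≤ u * (1 - u) := mul_nonneg hu0 (by linarith)
  calc (1 - s) * (1 - u) * fac ^ 2 + (1 - s) * u * fae ^ 2 +
      s * (1 - u) * fbc ^ 2 + s * u * fbe ^ 2 -
      s * (1 - s) * fab ^ 2 - u * (1 - u) * fce ^ 2
      ≤ (1 - s) * (1 - u) * ((1 + ε) ^ 2 * nac ^ 2) + (1 - s) * u * ((1 + ε) ^ 2 * nae ^ 2) +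
        s * (1 - u) * ((1 + ε) ^ 2 * nbc ^ 2) + s * u * ((1 + ε) ^ 2 * nbe ^ 2) -
        s * (1 - s) * ((1 - ε) ^ 2 * nab ^ 2) - u * (1 - u) * ((1 - ε) ^ 2 * nce ^ 2) := by
        have := mul_le_mul_of_nonneg_left H1 c1
        have := mul_le_mul_of_nonneg_left H2 c2
        have := mul_le_mul_of_nonneg_left H3 c3
        have := mul_le_mul_of_nonneg_left H4 c4
        have := mul_le_mul_of_nonneg_left H5 c5
        have := mul_le_mul_of_nonneg_left H6 c6
        linarith
    _ = (1 + ε) ^ 2 * ((1 - s) * (1 - u) * nac ^ 2 + (1 - s) * u * nae ^ 2 +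
        s * (1 - u) * nbc ^ 2 + s * u * nbe ^ 2 -
        s * (1 - s) * nab ^ 2 - u * (1 - u) * nce ^ 2) +
        (4 * ε) * (s * (1 - s) * nab ^ 2) + (4 * ε) * (u * (1 - u) * nce ^ 2) := by ring
    _ ≤ (1 + ε) ^ 2 * ((1 - s) * (1 - u) * nac ^ 2 + (1 - s) * u * nae ^ 2 +
        s * (1 - u) * nbc ^ 2 + s * u * nbe ^ 2 -
        s * (1 - s) * nab ^ 2 - u * (1 - u) * nce ^ 2) +
        (4 * ε) * ((1/4) * α ^ 2) + (4 * ε) * ((1/4) * α ^ 2) := by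
        have e1 := mul_le_mul_of_nonneg_left Q1 (by linarith : (0:ℝ) ≤ 4 * ε)
        have e2 := mul_le_mul_of_nonneg_left Q2 (by linarith : (0:ℝ) ≤ 4 * ε)
        linarith
    _ = (1 + ε) ^ 2 * ((1 - s) * (1 - u) * nac ^ 2 + (1 - s) * u * nae ^ 2 +
        s * (1 - u) * nbc ^ 2 + s * u * nbe ^ 2 -
        s * (1 - s) * nab ^ 2 - u * (1 - u) * nce ^ 2) + 2 * ε * α ^ 2 := by ring

open scoped RealInnerProductSpace

lemma quad_identity {E : Type*} [NormedAddCommGroup E] [InnerProductSpace ℝ E]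
    (a b c e : E) (s u : ℝ) :
    ‖(a + s • (b - a)) - (c + u • (e - c))‖ ^ 2 =
      (1 - s) * (1 - u) * ‖a - c‖ ^ 2 + (1 - s) * u * ‖a - e‖ ^ 2 +
      s * (1 - u) * ‖b - c‖ ^ 2 + s * u * ‖b - e‖ ^ 2 -
      s * (1 - s) * ‖a - b‖ ^ 2 - u * (1 - u) * ‖c - e‖ ^ 2 := by
  simp only [← real_inner_self_eq_norm_sq]
  simp only [inner_sub_left, inner_sub_right, inner_add_left, inner_add_right,
    inner_smul_left, inner_smul_right, RCLike.conj_to_real]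
  rw [real_inner_comm b a, real_inner_comm c a, real_inner_comm e a, real_inner_comm c b,
    real_inner_comm e b, real_inner_comm e c]
  ring

/-- The set of values over which `frechetDist` takes its infimum. -/
def repSet {X : Type*} [PseudoMetricSpace X] (τ σ : ℝ → X) : Set ℝ :=
  {r : ℝ | ∃ h : ℝ → ℝ, ContinuousOn h (Set.Icc 0 1) ∧
    Set.BijOn h (Set.Icc 0 1) (Set.Icc 0 1) ∧ h 0 = 0 ∧ h 1 = 1 ∧
    ∀ t ∈ Set.Icc (0 : ℝ) 1, dist (τ t) (σ (h t)) ≤ r}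

lemma frechetDist_eq {X : Type*} [PseudoMetricSpace X] (τ σ : ℝ → X) :
    frechetDist τ σ = sInf (repSet τ σ) := rfl

lemma repSet_nonneg {X : Type*} [PseudoMetricSpace X] {τ σ : ℝ → X} {r : ℝ}
    (hr : r ∈ repSet τ σ) : 0 ≤ r := by
  obtain ⟨h, -, -, -, -, hb⟩ := hr
  exact le_trans dist_nonneg (hb 0 (by constructor <;> norm_num))

lemma repSet_bddBelow {X : Type*} [PseudoMetricSpace X] (τ σ : ℝ → X) :
    BddBelow (repSet τ σ) := ⟨0, fun r hr => repSet_nonneg hr⟩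

-- coverage + representation
lemma poly_rep {m : ℕ} (hm : 2 ≤ m) (ts : Fin m → ℝ) (hts : StrictMono ts)
    (h0 : ts ⟨0, by omega⟩ = 0) (h1 : ts ⟨m - 1, by omega⟩ = 1)
    {t : ℝ} (ht0 : 0 ≤ t) (ht1 : t ≤ 1) :
    ∃ (i : ℕ) (hi : i + 1 < m) (s : ℝ), 0 ≤ s ∧ s ≤ 1 ∧
      ∀ {X : Type*} [AddCommGroup X] [Module ℝ X] (τ : ℝ → X) (v : Fin m → X),
        IsPolyOn τ v ts →
        τ t = v ⟨i, by omega⟩ + s • (v ⟨i + 1, hi⟩ - v ⟨i, by omega⟩) := by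
  classical
  set g : ℕ → ℝ := fun j => ts ⟨min j (m - 1), by omega⟩ with hg
  have hP0 : g 0 ≤ t := by
    have : (⟨min 0 (m-1), by omega⟩ : Fin m) = ⟨0, by omega⟩ := by
      simp [Nat.min_eq_left (by omega : 0 ≤ m - 1)]
    simp only [hg, this, h0]; exact ht0
  set i := Nat.findGreatest (fun j => g j ≤ t) (m - 2) with hi_def
  have hile : i ≤ m - 2 := Nat.findGreatest_le _
  have hi : i + 1 < m := by omega
  have hPi : g i ≤ t := Nat.findGreatest_spec (P := fun j => g j ≤ t) (Nat.zero_le _) hP0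
  have hgi : g i = ts ⟨i, by omega⟩ := by
    simp only [hg]; congr 1; simp [Nat.min_eq_left (by omega : i ≤ m - 1)]
  have hupper : t ≤ ts ⟨i + 1, hi⟩ := by
    rcases eq_or_lt_of_le hile with heq | hlt
    · have : (⟨i + 1, hi⟩ : Fin m) = ⟨m - 1, by omega⟩ := by
        congr 1; omega
      rw [this, h1]; exact ht1
    · have hng : ¬ (g (i + 1) ≤ t) :=
        Nat.findGreatest_is_greatest (P := fun j => g j ≤ t) (n := m - 2) (by omega) (by omega)
      have : g (i + 1) = ts ⟨i + 1, hi⟩ := by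
        simp only [hg]; congr 1; simp [Nat.min_eq_left (by omega : i + 1 ≤ m - 1)]
      rw [this] at hng; linarith
  have hlow : ts ⟨i, by omega⟩ ≤ t := hgi ▸ hPi
  have hd : (0:ℝ) < ts ⟨i + 1, hi⟩ - ts ⟨i, by omega⟩ := by
    have := hts (show (⟨i, by omega⟩ : Fin m) < ⟨i + 1, hi⟩ from by simp [Fin.lt_def])
    linarith
  refine ⟨i, hi, (t - ts ⟨i, by omega⟩) / (ts ⟨i + 1, hi⟩ - ts ⟨i, by omega⟩),
    div_nonneg (by linarith) hd.le, (div_le_one hd).2 (by linarith), ?_⟩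
  intro X _ _ τ v hτv
  exact hτv i hi t hlow hupper

lemma le_edgeMax {X : Type*} [PseudoMetricSpace X] {m : ℕ} (v : Fin m → X)
    (i : ℕ) (hi : i + 1 < m) :
    dist (v ⟨i, by omega⟩) (v ⟨i + 1, hi⟩) ≤ edgeMax v := by
  classical
  apply le_csSup
  · set g : ℕ → ℝ := fun k => if h : k + 1 < m then dist (v ⟨k, by omega⟩) (v ⟨k + 1, h⟩) else 0
    refine (((Set.finite_Iic m).image g).bddAbove).mono ?_
    rintro r ⟨j, hj, rfl⟩
    exact ⟨j, Set.mem_Iic.mpr (by omega), by simp [g, dif_pos hj]⟩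
  · exact ⟨i, hi, rfl⟩

lemma poly_norm_le {X : Type*} [NormedAddCommGroup X] [NormedSpace ℝ X] {m : ℕ}
    (hm : 2 ≤ m) (ts : Fin m → ℝ) (hts : StrictMono ts)
    (h0 : ts ⟨0, by omega⟩ = 0) (h1 : ts ⟨m - 1, by omega⟩ = 1)
    (τ : ℝ → X) (v : Fin m → X) (hτ : IsPolyOn τ v ts)
    {t : ℝ} (ht0 : 0 ≤ t) (ht1 : t ≤ 1) :
    ‖τ t‖ ≤ 3 * ∑ j, ‖v j‖ := by
  obtain ⟨i, hi, s, hs0, hs1, hrep⟩ := poly_rep hm ts hts h0 h1 ht0 ht1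
  rw [hrep τ v hτ]
  have ha : ‖v ⟨i, by omega⟩‖ ≤ ∑ j, ‖v j‖ :=
    Finset.single_le_sum (fun j _ => norm_nonneg _) (Finset.mem_univ _)
  have hb : ‖v ⟨i + 1, hi⟩‖ ≤ ∑ j, ‖v j‖ :=
    Finset.single_le_sum (fun j _ => norm_nonneg _) (Finset.mem_univ _)
  have hsm : ‖s • (v ⟨i + 1, hi⟩ - v ⟨i, by omega⟩)‖ ≤
      ‖v ⟨i + 1, hi⟩‖ + ‖v ⟨i, by omega⟩‖ := by
    rw [norm_smul, Real.norm_eq_abs, abs_of_nonneg hs0]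
    calc s * ‖v ⟨i + 1, hi⟩ - v ⟨i, by omega⟩‖
        ≤ 1 * ‖v ⟨i + 1, hi⟩ - v ⟨i, by omega⟩‖ :=
          mul_le_mul_of_nonneg_right hs1 (norm_nonneg _)
      _ = ‖v ⟨i + 1, hi⟩ - v ⟨i, by omega⟩‖ := one_mul _
      _ ≤ ‖v ⟨i + 1, hi⟩‖ + ‖v ⟨i, by omega⟩‖ := norm_sub_le _ _
  calc ‖v ⟨i, by omega⟩ + s • (v ⟨i + 1, hi⟩ - v ⟨i, by omega⟩)‖
      ≤ ‖v ⟨i, by omega⟩‖ + ‖s • (v ⟨i + 1, hi⟩ - v ⟨i, by omega⟩)‖ := norm_add_le _ _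
    _ ≤ 3 * ∑ j, ‖v j‖ := by linarith

/-- If `f` is a `(1±ε)`-distortion embedding of the vertices of polygonal
curves `τ, σ` and `Fτ, Fσ` are the polygonal curves on the images of the vertices (same
instants), then `d_F(Fτ,Fσ)² ≤ (1+ε)² d_F(τ,σ)² + 2ε α(τ,σ)²` with `α(τ,σ)` the maximum
edge length of `τ` or `σ`. -/
theorem jl_frechet_upper {d d' : ℕ} (ε : ℝ) (hε0 : 0 < ε) (hε1 : ε < 1)
    {mτ mσ : ℕ} (hmτ : 2 ≤ mτ) (hmσ : 2 ≤ mσ)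
    (vτ : Fin mτ → EuclideanSpace ℝ (Fin d)) (tτ : Fin mτ → ℝ)
    (vσ : Fin mσ → EuclideanSpace ℝ (Fin d)) (tσ : Fin mσ → ℝ)
    (htτ : StrictMono tτ) (htτ0 : tτ ⟨0, by omega⟩ = 0) (htτ1 : tτ ⟨mτ - 1, by omega⟩ = 1)
    (htσ : StrictMono tσ) (htσ0 : tσ ⟨0, by omega⟩ = 0) (htσ1 : tσ ⟨mσ - 1, by omega⟩ = 1)
    (τ σ : ℝ → EuclideanSpace ℝ (Fin d))
    (hτ : IsPolyOn τ vτ tτ) (hσ : IsPolyOn σ vσ tσ)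
    (f : EuclideanSpace ℝ (Fin d) → EuclideanSpace ℝ (Fin d'))
    (hf : ∀ x ∈ Set.range vτ ∪ Set.range vσ, ∀ y ∈ Set.range vτ ∪ Set.range vσ,
      (1 - ε) * ‖x - y‖ ≤ ‖f x - f y‖ ∧ ‖f x - f y‖ ≤ (1 + ε) * ‖x - y‖)
    (Fτ Fσ : ℝ → EuclideanSpace ℝ (Fin d'))
    (hFτ : IsPolyOn Fτ (f ∘ vτ) tτ) (hFσ : IsPolyOn Fσ (f ∘ vσ) tσ) :
    frechetDist Fτ Fσ ^ 2
      ≤ (1 + ε) ^ 2 * frechetDist τ σ ^ 2 + 2 * ε * max (edgeMax vτ) (edgeMax vσ) ^ 2 := by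
  classical
  set α := max (edgeMax vτ) (edgeMax vσ) with hα
  have hα0 : 0 ≤ α :=
    le_trans dist_nonneg (le_trans (le_edgeMax vτ 0 (by omega)) (le_max_left _ _))
  have hedgeτ : ∀ (i : ℕ) (hi : i + 1 < mτ), ‖vτ ⟨i, by omega⟩ - vτ ⟨i + 1, hi⟩‖ ≤ α := by
    intro i hi
    rw [← dist_eq_norm]
    exact le_trans (le_edgeMax vτ i hi) (le_max_left _ _)
  have hedgeσ : ∀ (j : ℕ) (hj : j + 1 < mσ), ‖vσ ⟨j, by omega⟩ - vσ ⟨j + 1, hj⟩‖ ≤ α := by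
    intro j hj
    rw [← dist_eq_norm]
    exact le_trans (le_edgeMax vσ j hj) (le_max_right _ _)
  -- membership transfer
  have memF : ∀ r ∈ repSet τ σ,
      Real.sqrt ((1 + ε) ^ 2 * r ^ 2 + 2 * ε * α ^ 2) ∈ repSet Fτ Fσ := by
    rintro r ⟨h, hcont, hbij, h0, h1, hb⟩
    refine ⟨h, hcont, hbij, h0, h1, fun t ht => ?_⟩
    have hht : h t ∈ Set.Icc (0:ℝ) 1 := hbij.mapsTo ht
    obtain ⟨i, hi, s, hs0, hs1, hrepτ⟩ := poly_rep hmτ tτ htτ htτ0 htτ1 ht.1 ht.2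
    obtain ⟨j, hj, u, hu0, hu1, hrepσ⟩ := poly_rep hmσ tσ htσ htσ0 htσ1 hht.1 hht.2
    have hτt : τ t = vτ ⟨i, by omega⟩ + s • (vτ ⟨i + 1, hi⟩ - vτ ⟨i, by omega⟩) :=
      hrepτ τ vτ hτ
    have hσt : σ (h t) = vσ ⟨j, by omega⟩ + u • (vσ ⟨j + 1, hj⟩ - vσ ⟨j, by omega⟩) :=
      hrepσ σ vσ hσ
    have hFτt : Fτ t = f (vτ ⟨i, by omega⟩) +
        s • (f (vτ ⟨i + 1, hi⟩) - f (vτ ⟨i, by omega⟩)) := by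
      simpa [Function.comp] using hrepτ Fτ (f ∘ vτ) hFτ
    have hFσt : Fσ (h t) = f (vσ ⟨j, by omega⟩) +
        u • (f (vσ ⟨j + 1, hj⟩) - f (vσ ⟨j, by omega⟩)) := by
      simpa [Function.comp] using hrepσ Fσ (f ∘ vσ) hFσ
    have hma : vτ ⟨i, by omega⟩ ∈ Set.range vτ ∪ Set.range vσ := Or.inl ⟨_, rfl⟩
    have hmb : vτ ⟨i + 1, hi⟩ ∈ Set.range vτ ∪ Set.range vσ := Or.inl ⟨_, rfl⟩
    have hmc : vσ ⟨j, by omega⟩ ∈ Set.range vτ ∪ Set.range vσ := Or.inr ⟨_, rfl⟩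
    have hme : vσ ⟨j + 1, hj⟩ ∈ Set.range vτ ∪ Set.range vσ := Or.inr ⟨_, rfl⟩
    have key : dist (Fτ t) (Fσ (h t)) ^ 2 ≤
        (1 + ε) ^ 2 * dist (τ t) (σ (h t)) ^ 2 + 2 * ε * α ^ 2 := by
      rw [dist_eq_norm, dist_eq_norm, hτt, hσt, hFτt, hFσt, quad_identity, quad_identity]
      exact key_num ε s u hε0 hε1 hs0 hs1 hu0 hu1 _ _ _ _ _ _ _ _ _ _ _ _ α
        (norm_nonneg _) (norm_nonneg _)
        (norm_nonneg _) (norm_nonneg _) (norm_nonneg _) (norm_nonneg _)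
        (hf _ hma _ hmc).2 (hf _ hma _ hme).2 (hf _ hmb _ hmc).2 (hf _ hmb _ hme).2
        (hf _ hma _ hmb).1 (hf _ hmc _ hme).1
        (hedgeτ i hi) (hedgeσ j hj)
    have hdr : dist (τ t) (σ (h t)) ≤ r := hb t ht
    have hd2 : dist (τ t) (σ (h t)) ^ 2 ≤ r ^ 2 := pow_le_pow_left₀ dist_nonneg hdr 2
    have hmono : (1 + ε) ^ 2 * dist (τ t) (σ (h t)) ^ 2 ≤ (1 + ε) ^ 2 * r ^ 2 :=
      mul_le_mul_of_nonneg_left hd2 (by positivity)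
    have hrhs0 : (0:ℝ) ≤ (1 + ε) ^ 2 * r ^ 2 + 2 * ε * α ^ 2 := by positivity
    exact (Real.le_sqrt dist_nonneg hrhs0).2 (by linarith)
  -- nonemptiness of repSet τ σ
  have hne : (repSet τ σ).Nonempty := by
    refine ⟨3 * ∑ j, ‖vτ j‖ + 3 * ∑ j, ‖vσ j‖, id, continuousOn_id, Set.bijOn_id _,
      rfl, rfl, fun t ht => ?_⟩
    have b1 := poly_norm_le hmτ tτ htτ htτ0 htτ1 τ vτ hτ ht.1 ht.2
    have b2 := poly_norm_le hmσ tσ htσ htσ0 htσ1 σ vσ hσ ht.1 ht.2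
    calc dist (τ t) (σ (id t)) = ‖τ t - σ t‖ := dist_eq_norm _ _
      _ ≤ ‖τ t‖ + ‖σ t‖ := norm_sub_le _ _
      _ ≤ 3 * ∑ j, ‖vτ j‖ + 3 * ∑ j, ‖vσ j‖ := by linarith
  set D := frechetDist Fτ Fσ with hD
  set R := frechetDist τ σ with hR
  have hD0 : 0 ≤ D := by
    rw [hD, frechetDist_eq]
    exact Real.sInf_nonneg fun r hr => repSet_nonneg hr
  have hR0 : 0 ≤ R := by
    rw [hR, frechetDist_eq]
    exact Real.sInf_nonneg fun r hr => repSet_nonneg hr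
  have hDsq : ∀ r ∈ repSet τ σ, D ^ 2 ≤ (1 + ε) ^ 2 * r ^ 2 + 2 * ε * α ^ 2 := by
    intro r hr
    have h1 : D ≤ Real.sqrt ((1 + ε) ^ 2 * r ^ 2 + 2 * ε * α ^ 2) := by
      rw [hD, frechetDist_eq]
      exact csInf_le (repSet_bddBelow _ _) (memF r hr)
    have hrr := repSet_nonneg hr
    have hrhs0 : (0:ℝ) ≤ (1 + ε) ^ 2 * r ^ 2 + 2 * ε * α ^ 2 := by positivity
    calc D ^ 2 ≤ Real.sqrt ((1 + ε) ^ 2 * r ^ 2 + 2 * ε * α ^ 2) ^ 2 :=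
          pow_le_pow_left₀ hD0 h1 2
      _ = (1 + ε) ^ 2 * r ^ 2 + 2 * ε * α ^ 2 := Real.sq_sqrt hrhs0
  by_cases hc : D ^ 2 ≤ 2 * ε * α ^ 2
  · have : (0:ℝ) ≤ (1 + ε) ^ 2 * R ^ 2 := by positivity
    linarith
  · push_neg at hc
    have hmain : Real.sqrt ((D ^ 2 - 2 * ε * α ^ 2) / (1 + ε) ^ 2) ≤ R := by
      rw [hR, frechetDist_eq]
      refine le_csInf hne fun r hr => ?_
      have hrr := repSet_nonneg hr
      have h2 := hDsq r hr
      have h3 : (D ^ 2 - 2 * ε * α ^ 2) / (1 + ε) ^ 2 ≤ r ^ 2 := by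
        rw [div_le_iff₀ (by positivity)]
        linarith
      calc Real.sqrt ((D ^ 2 - 2 * ε * α ^ 2) / (1 + ε) ^ 2)
          ≤ Real.sqrt (r ^ 2) := Real.sqrt_le_sqrt h3
        _ = r := Real.sqrt_sq hrr
    have hnum0 : (0:ℝ) ≤ (D ^ 2 - 2 * ε * α ^ 2) / (1 + ε) ^ 2 := by
      apply div_nonneg (by linarith) (by positivity)
    have h4 : (D ^ 2 - 2 * ε * α ^ 2) / (1 + ε) ^ 2 ≤ R ^ 2 := by
      calc (D ^ 2 - 2 * ε * α ^ 2) / (1 + ε) ^ 2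
          = Real.sqrt ((D ^ 2 - 2 * ε * α ^ 2) / (1 + ε) ^ 2) ^ 2 :=
            (Real.sq_sqrt hnum0).symm
        _ ≤ R ^ 2 := pow_le_pow_left₀ (Real.sqrt_nonneg _) hmain 2
    rw [div_le_iff₀ (by positivity : (0:ℝ) < (1 + ε) ^ 2)] at h4
    nlinarith [h4]
end

section
/- Let m ≥ 1 and let A, B : {1, …, m} → {0,1} be bit-strings. Define the polygonal curve α in ℝ with 4m vertices as follows: for each i ∈ {1, …, m}, if A[i] = 0 then (v^α_{4i−3}, v^α_{4i−2}, v^α_{4i−1}, v^α_{4i}) := (2i, 2i + 2/3, 2i + 4/3, 2i + 2), and if A[i] = 1 then (v^α_{4i−3}, v^α_{4i−2}, v^α_{4i−1}, v^α_{4i}) := (2i, 2i + 2, 2i, 2i + 2); define β analogously from B. Then: (1) if there exists i ∈ {1, …, m} with A[i] ≠ B[i], then d_F(α, β) ≥ 1; and (2) if A[i] = B[i] for all i ∈ {1, …, m}, then d_F(α, β) = 0. -/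
/-- The polygonal curve on `n+1` vertices `v 0, …, v n` with equally spaced instants
`t_j = j/n`: on `[j/n, (j+1)/n]` it linearly interpolates between `v j` and `v (j+1)`. -/
noncomputable def polyline {X : Type*} [AddCommGroup X] [Module ℝ X] :
    {n : ℕ} → (Fin (n + 1) → X) → ℝ → X
  | 0, v, _ => v 0
  | n + 1, v, t =>
    let s : ℝ := t * (n + 1)
    let i : ℕ := ⌊s⌋₊ ⊓ n
    have hi : i ≤ n := min_le_right _ _
    v ⟨i, by omega⟩ + (s - (i : ℝ)) • (v ⟨i + 1, by omega⟩ - v ⟨i, by omega⟩)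

/-- The vertices of the one-dimensional gadget curve for a bit-string `A` of length `m`:
the `i`-th bit (0-based) contributes the four vertices `2(i+1), 2(i+1)+2/3, 2(i+1)+4/3,
2(i+1)+2` (a straight-line gadget) if `A i = 0 = false`, and `2(i+1), 2(i+1)+2, 2(i+1),
2(i+1)+2` (a zigzag gadget) if `A i = 1 = true`. -/
noncomputable def zigzagVerts (m : ℕ) (A : Fin m → Bool) (j : Fin (4 * m)) : ℝ :=
  let i : ℕ := j.1 / 4
  let b : ℝ := 2 * (i + 1)
  let r : ℕ := j.1 % 4
  if A ⟨i, by have := j.isLt; omega⟩ then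
    (if r = 0 then b else if r = 1 then b + 2 else if r = 2 then b else b + 2)
  else
    (if r = 0 then b else if r = 1 then b + 2 / 3 else if r = 2 then b + 4 / 3 else b + 2)

/-! ### Auxiliary lemmas about `polyline` -/

lemma polyline_apply {n : ℕ} (hn : 1 ≤ n) (v : Fin (n + 1) → ℝ) (t : ℝ) :
    polyline v t = v ⟨min ⌊t * n⌋₊ (n - 1), by omega⟩ +
      (t * n - (min ⌊t * n⌋₊ (n - 1) : ℕ)) *
        (v ⟨min ⌊t * n⌋₊ (n - 1) + 1, by omega⟩ - v ⟨min ⌊t * n⌋₊ (n - 1), by omega⟩) := by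
  obtain ⟨k, rfl⟩ : ∃ k, n = k + 1 := ⟨n - 1, by omega⟩
  simp [polyline, smul_eq_mul]

section lems
variable {n : ℕ} (hn : 1 ≤ n) (v : Fin (n + 1) → ℝ)
include hn

lemma poly_params {t : ℝ} (ht0 : 0 ≤ t) (ht1 : t ≤ 1) :
    ((min ⌊t * n⌋₊ (n - 1) : ℕ) : ℝ) ≤ t * n ∧
      t * n ≤ ((min ⌊t * n⌋₊ (n - 1) : ℕ) : ℝ) + 1 ∧
      (min ⌊t * n⌋₊ (n - 1) : ℕ) ≤ n - 1 := by
  have hs0 : 0 ≤ t * n := by positivity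
  have hsn : t * n ≤ n := by
    calc t * n ≤ 1 * n := mul_le_mul_of_nonneg_right ht1 (by positivity)
    _ = n := one_mul _
  have hfl : (⌊t * n⌋₊ : ℝ) ≤ t * n := Nat.floor_le hs0
  have hfl2 : t * n < ⌊t * n⌋₊ + 1 := Nat.lt_floor_add_one _
  rcases le_or_gt ⌊t * n⌋₊ (n - 1) with h | h
  · rw [min_eq_left h]
    exact ⟨hfl, by linarith, h⟩
  · rw [min_eq_right h.le]
    have h1 : ((n - 1 : ℕ) : ℝ) = (n : ℝ) - 1 := by
      have : (1:ℕ) ≤ n := hn; push_cast [this]; ring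
    have h2 : (n : ℝ) ≤ ⌊t * n⌋₊ := by exact_mod_cast (show n ≤ ⌊t * n⌋₊ by omega)
    exact ⟨by rw [h1]; linarith, by rw [h1]; linarith, le_refl _⟩

/-- upper bound -/
lemma poly_le {t : ℝ} (ht0 : 0 ≤ t) (ht1 : t ≤ 1) {a : ℕ} {b : ℝ}
    (hs : t * n ≤ a) (hv : ∀ j : Fin (n + 1), j.1 ≤ a → v j ≤ b) :
    polyline v t ≤ b := by
  rw [polyline_apply hn]
  set k := min ⌊t * n⌋₊ (n - 1) with hk
  obtain ⟨hk1, hk2, hk3⟩ := poly_params hn (t := t) ht0 ht1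
  rw [← hk] at hk1 hk2 hk3
  have hka : k ≤ a := by
    have : (k : ℝ) ≤ a := le_trans hk1 hs
    exact_mod_cast this
  have hvk : v ⟨k, by omega⟩ ≤ b := hv _ hka
  rcases le_or_gt (k + 1) a with h | h
  · have hvk1 : v ⟨k + 1, by omega⟩ ≤ b := hv _ h
    nlinarith
  · have hka' : k = a := by omega
    have hsk : t * n - (k : ℝ) = 0 := by
      have := le_antisymm (hka' ▸ hs) hk1; linarith
    rw [hsk, zero_mul, add_zero]
    exact hvk

/-- lower bound -/
lemma poly_ge {t : ℝ} (ht0 : 0 ≤ t) (ht1 : t ≤ 1) {a : ℕ} {b : ℝ}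
    (hs : (a : ℝ) ≤ t * n) (hv : ∀ j : Fin (n + 1), a ≤ j.1 → b ≤ v j) :
    b ≤ polyline v t := by
  rw [polyline_apply hn]
  set k := min ⌊t * n⌋₊ (n - 1) with hk
  obtain ⟨hk1, hk2, hk3⟩ := poly_params hn (t := t) ht0 ht1
  rw [← hk] at hk1 hk2 hk3
  have hak1 : a ≤ k + 1 := by
    have : (a : ℝ) ≤ (k : ℝ) + 1 := hs.trans hk2
    exact_mod_cast this
  have hvk1 : b ≤ v ⟨k + 1, by omega⟩ := hv _ hak1
  rcases le_or_gt ⌊t * n⌋₊ (n - 1) with h | h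
  · have hkf : k = ⌊t * n⌋₊ := min_eq_left h
    have hlt : t * n < (k : ℝ) + 1 := by
      have := Nat.lt_floor_add_one (t * (n : ℝ)); rw [hkf]; push_cast; linarith
    have hak : a ≤ k := by
      have : (a : ℝ) < (k : ℝ) + 1 := lt_of_le_of_lt hs hlt
      have : a < k + 1 := by exact_mod_cast this
      omega
    have hvk : b ≤ v ⟨k, by omega⟩ := hv _ hak
    nlinarith
  · have hkf : k = n - 1 := min_eq_right h.le
    have hsn : t * n ≤ (n : ℝ) := by
      calc t * n ≤ 1 * n := mul_le_mul_of_nonneg_right ht1 (by positivity)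
      _ = n := one_mul _
    have hge : (n : ℝ) ≤ t * n := by
      have h2 : (n : ℕ) ≤ ⌊t * n⌋₊ := by omega
      have := Nat.le_floor_iff (by positivity : (0:ℝ) ≤ t * n) |>.mp h2
      exact this
    have hseq : t * n = (n : ℝ) := le_antisymm hsn hge
    have hkr : (k : ℝ) = (n : ℝ) - 1 := by
      rw [hkf]; push_cast [hn]; ring
    have hc1 : t * n - (k : ℝ) = 1 := by rw [hseq, hkr]; ring
    rw [hc1, one_mul]
    linarith [hvk1]

/-- linear piece -/
lemma poly_linear {t : ℝ} (ht0 : 0 ≤ t) (ht1 : t ≤ 1) {a : ℕ} {b : ℝ} (ha : a + 3 ≤ n)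
    (hv : ∀ j : Fin (n + 1), a ≤ j.1 → j.1 ≤ a + 3 → v j = b + ((j.1 : ℝ) - a) * (2 / 3))
    (hs1 : (a : ℝ) ≤ t * n) (hs2 : t * n ≤ (a : ℝ) + 3) :
    polyline v t = b + (t * n - a) * (2 / 3) := by
  rw [polyline_apply hn]
  set k := min ⌊t * n⌋₊ (n - 1) with hk
  obtain ⟨hk1, hk2, hk3⟩ := poly_params hn (t := t) ht0 ht1
  rw [← hk] at hk1 hk2 hk3
  have hka3 : k ≤ a + 3 := by
    have : (k : ℝ) ≤ (a : ℝ) + 3 := hk1.trans hs2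
    exact_mod_cast this
  have hak : a ≤ k := by
    rcases le_or_gt ⌊t * n⌋₊ (n - 1) with h | h
    · have hkf : k = ⌊t * n⌋₊ := min_eq_left h
      have hlt : t * n < (k : ℝ) + 1 := by
        have := Nat.lt_floor_add_one (t * (n : ℝ)); rw [hkf]; push_cast; linarith
      have : (a : ℝ) < (k : ℝ) + 1 := lt_of_le_of_lt hs1 hlt
      have : a < k + 1 := by exact_mod_cast this
      omega
    · have hkf : k = n - 1 := min_eq_right h.le
      omega
  rcases le_or_gt (k + 1) (a + 3) with h | h
  · have hva : v ⟨k, by omega⟩ = b + ((k : ℝ) - a) * (2 / 3) :=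
      hv ⟨k, by omega⟩ (show a ≤ k from hak) (show k ≤ a + 3 from by omega)
    have hvb : v ⟨k + 1, by omega⟩ = b + (((k : ℝ) + 1) - a) * (2 / 3) := by
      have := hv ⟨k + 1, by omega⟩ (show a ≤ k + 1 from by omega)
        (show k + 1 ≤ a + 3 from h)
      rw [this]
      norm_num
    rw [hva, hvb]
    ring
  · have hka' : k = a + 3 := by omega
    have hkr : (k : ℝ) = (a : ℝ) + 3 := by rw [hka']; push_cast; ring
    have hsk : t * n - (k : ℝ) = 0 := by linarith
    have hva : v ⟨k, by omega⟩ = b + ((k : ℝ) - a) * (2 / 3) :=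
      hv ⟨k, by omega⟩ (show a ≤ k from hak) (show k ≤ a + 3 from by omega)
    rw [hsk, zero_mul, add_zero, hva, hkr]
    linarith

/-- vertex evaluation -/
lemma poly_vertex {j : ℕ} (hj : j ≤ n) :
    polyline v ((j : ℝ) / n) = v ⟨j, by omega⟩ := by
  have hn0 : (0 : ℝ) < n := by exact_mod_cast hn
  have hs : (j : ℝ) / n * n = (j : ℝ) := by field_simp
  rw [polyline_apply hn]; simp only [hs]
  simp only [Nat.floor_natCast]
  rcases le_or_gt j (n - 1) with h | h
  · have hm : j ⊓ (n - 1) = j := min_eq_left h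
    simp only [hm]
    simp
  · have hjn : j = n := by omega
    have hm : j ⊓ (n - 1) = n - 1 := min_eq_right (by omega)
    simp only [hm]
    have h2 : ((n - 1 : ℕ) : ℝ) = (n : ℝ) - 1 := by push_cast [hn]; ring
    have h1 : n - 1 + 1 = n := by omega
    have h4 : (⟨n - 1 + 1, by omega⟩ : Fin (n + 1)) = ⟨n, by omega⟩ := by simp [h1]
    have h5 : (⟨j, by omega⟩ : Fin (n + 1)) = ⟨n, by omega⟩ := by simp [hjn]
    rw [h2, h4, h5]
    have h6 : (j : ℝ) = (n : ℝ) := by rw [hjn]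
    have h7 : (j : ℝ) - ((n : ℝ) - 1) = 1 := by rw [h6]; ring
    rw [h7, one_mul]
    ring

end lems

/-! ### Auxiliary lemmas about `zigzagVerts` -/

lemma zig_val_false {m : ℕ} {A : Fin m → Bool} (j : Fin (4 * m)) (p : j.1 / 4 < m)
    (h : A ⟨j.1 / 4, p⟩ = false) :
    zigzagVerts m A j =
      (if j.1 % 4 = 0 then 2 * (((j.1 / 4 : ℕ) : ℝ) + 1)
        else if j.1 % 4 = 1 then 2 * (((j.1 / 4 : ℕ) : ℝ) + 1) + 2 / 3
        else if j.1 % 4 = 2 then 2 * (((j.1 / 4 : ℕ) : ℝ) + 1) + 4 / 3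
        else 2 * (((j.1 / 4 : ℕ) : ℝ) + 1) + 2) := by
  simp only [zigzagVerts]
  rw [h]
  simp

lemma zig_val_true {m : ℕ} {A : Fin m → Bool} (j : Fin (4 * m)) (p : j.1 / 4 < m)
    (h : A ⟨j.1 / 4, p⟩ = true) :
    zigzagVerts m A j =
      (if j.1 % 4 = 0 then 2 * (((j.1 / 4 : ℕ) : ℝ) + 1)
        else if j.1 % 4 = 1 then 2 * (((j.1 / 4 : ℕ) : ℝ) + 1) + 2
        else if j.1 % 4 = 2 then 2 * (((j.1 / 4 : ℕ) : ℝ) + 1)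
        else 2 * (((j.1 / 4 : ℕ) : ℝ) + 1) + 2) := by
  simp only [zigzagVerts]
  rw [h]
  simp

lemma zig_mem (m : ℕ) (A : Fin m → Bool) (j : Fin (4 * m)) :
    2 * (((j.1 / 4 : ℕ) : ℝ) + 1) ≤ zigzagVerts m A j ∧
      zigzagVerts m A j ≤ 2 * (((j.1 / 4 : ℕ) : ℝ) + 1) + 2 := by
  have p : j.1 / 4 < m := by have := j.isLt; omega
  cases h : A ⟨j.1 / 4, p⟩
  · rw [zig_val_false j p h]; constructor <;> split_ifs <;> norm_num
  · rw [zig_val_true j p h]; constructor <;> split_ifs <;> norm_num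

lemma zig_le (m : ℕ) (A : Fin m → Bool) (j : Fin (4 * m)) (i0 : ℕ) (h : j.1 ≤ 4 * i0) :
    zigzagVerts m A j ≤ 2 * ((i0 : ℝ) + 1) := by
  obtain ⟨h1, h2⟩ := zig_mem m A j
  by_cases hr : j.1 % 4 = 0
  · have hq : j.1 / 4 ≤ i0 := by omega
    have hq' : ((j.1 / 4 : ℕ) : ℝ) ≤ (i0 : ℝ) := by exact_mod_cast hq
    have p : j.1 / 4 < m := by have := j.isLt; omega
    cases hA : A ⟨j.1 / 4, p⟩
    · rw [zig_val_false j p hA, if_pos hr]; linarith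
    · rw [zig_val_true j p hA, if_pos hr]; linarith
  · have hq : j.1 / 4 + 2 ≤ i0 + 1 := by omega
    have hq' : ((j.1 / 4 : ℕ) : ℝ) + 2 ≤ (i0 : ℝ) + 1 := by exact_mod_cast hq
    linarith

lemma zig_ge (m : ℕ) (A : Fin m → Bool) (j : Fin (4 * m)) (i0 : ℕ) (h : 4 * i0 + 3 ≤ j.1) :
    2 * ((i0 : ℝ) + 1) + 2 ≤ zigzagVerts m A j := by
  obtain ⟨h1, h2⟩ := zig_mem m A j
  by_cases hq : j.1 / 4 = i0
  · have hr : j.1 % 4 = 3 := by omega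
    have hq' : ((j.1 / 4 : ℕ) : ℝ) = (i0 : ℝ) := by exact_mod_cast hq
    have p : j.1 / 4 < m := by have := j.isLt; omega
    cases hA : A ⟨j.1 / 4, p⟩
    · rw [zig_val_false j p hA, if_neg (by omega), if_neg (by omega), if_neg (by omega)]
      linarith
    · rw [zig_val_true j p hA, if_neg (by omega), if_neg (by omega), if_neg (by omega)]
      linarith
  · have hq2 : i0 + 2 ≤ j.1 / 4 + 1 := by omega
    have hq' : (i0 : ℝ) + 2 ≤ ((j.1 / 4 : ℕ) : ℝ) + 1 := by exact_mod_cast hq2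
    linarith

lemma zig_straight (m : ℕ) (A : Fin m → Bool) (i0 : ℕ) (hi : i0 < m)
    (hA : A ⟨i0, hi⟩ = false) (j : Fin (4 * m)) (h1 : 4 * i0 ≤ j.1) (h2 : j.1 ≤ 4 * i0 + 3) :
    zigzagVerts m A j = 2 * ((i0 : ℝ) + 1) + ((j.1 : ℝ) - ((4 * i0 : ℕ) : ℝ)) * (2 / 3) := by
  have hq : j.1 / 4 = i0 := by omega
  have p : j.1 / 4 < m := by omega
  have hAe : A ⟨j.1 / 4, p⟩ = false := by
    have he : (⟨j.1 / 4, p⟩ : Fin m) = ⟨i0, hi⟩ := Fin.ext hq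
    rw [he, hA]
  rw [zig_val_false j p hAe]
  have hq' : ((j.1 / 4 : ℕ) : ℝ) = (i0 : ℝ) := by exact_mod_cast hq
  have hj : (j.1 : ℝ) = ((4 * i0 : ℕ) : ℝ) + ((j.1 % 4 : ℕ) : ℝ) := by
    have : j.1 = 4 * i0 + j.1 % 4 := by omega
    exact_mod_cast this
  have hrm : j.1 % 4 = 0 ∨ j.1 % 4 = 1 ∨ j.1 % 4 = 2 ∨ j.1 % 4 = 3 := by omega
  rcases hrm with hr | hr | hr | hr <;>
    simp only [hr, hq', hj, if_true, if_false] <;> norm_num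

lemma zig_zig1 (m : ℕ) (A : Fin m → Bool) (i0 : ℕ) (hi : i0 < m)
    (hA : A ⟨i0, hi⟩ = true) (j : Fin (4 * m)) (hj : j.1 = 4 * i0 + 1) :
    zigzagVerts m A j = 2 * ((i0 : ℝ) + 1) + 2 := by
  have hq : j.1 / 4 = i0 := by omega
  have hr : j.1 % 4 = 1 := by omega
  have p : j.1 / 4 < m := by omega
  have hAe : A ⟨j.1 / 4, p⟩ = true := by
    have he : (⟨j.1 / 4, p⟩ : Fin m) = ⟨i0, hi⟩ := Fin.ext hq
    rw [he, hA]
  rw [zig_val_true j p hAe]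
  have hq' : ((j.1 / 4 : ℕ) : ℝ) = (i0 : ℝ) := by exact_mod_cast hq
  simp only [hr, hq']
  norm_num

lemma zig_zig2 (m : ℕ) (A : Fin m → Bool) (i0 : ℕ) (hi : i0 < m)
    (hA : A ⟨i0, hi⟩ = true) (j : Fin (4 * m)) (hj : j.1 = 4 * i0 + 2) :
    zigzagVerts m A j = 2 * ((i0 : ℝ) + 1) := by
  have hq : j.1 / 4 = i0 := by omega
  have hr : j.1 % 4 = 2 := by omega
  have p : j.1 / 4 < m := by omega
  have hAe : A ⟨j.1 / 4, p⟩ = true := by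
    have he : (⟨j.1 / 4, p⟩ : Fin m) = ⟨i0, hi⟩ := Fin.ext hq
    rw [he, hA]
  rw [zig_val_true j p hAe]
  have hq' : ((j.1 / 4 : ℕ) : ℝ) = (i0 : ℝ) := by exact_mod_cast hq
  simp only [hr, hq']
  norm_num

lemma zig_global (m : ℕ) (A : Fin m → Bool) (j : Fin (4 * m)) :
    2 ≤ zigzagVerts m A j ∧ zigzagVerts m A j ≤ 2 * (m : ℝ) + 2 := by
  obtain ⟨h1, h2⟩ := zig_mem m A j
  have hq : j.1 / 4 + 1 ≤ m := by have := j.isLt; omega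
  have hq' : ((j.1 / 4 : ℕ) : ℝ) + 1 ≤ (m : ℝ) := by exact_mod_cast hq
  have hq0 : (0 : ℝ) ≤ ((j.1 / 4 : ℕ) : ℝ) := by positivity
  constructor <;> linarith

/-! ### Core lower-bound argument -/

lemma frechet_core (m : ℕ) (hm : 1 ≤ m) (h4 : 4 * m - 1 + 1 = 4 * m) (C : Fin m → Bool)
    (i : Fin m) (hC : C i = false) {t1 t2 : ℝ} (ht1 : t1 ∈ Set.Icc (0:ℝ) 1)
    (ht2 : t2 ∈ Set.Icc (0:ℝ) 1) (h12 : t1 ≤ t2)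
    (hv1 : 2 * ((i.1 : ℝ) + 1) + 1 <
      polyline (n := 4 * m - 1) (fun j => zigzagVerts m C (Fin.cast h4 j)) t1)
    (hv2 : polyline (n := 4 * m - 1) (fun j => zigzagVerts m C (Fin.cast h4 j)) t2 <
      2 * ((i.1 : ℝ) + 1) + 1) :
    False := by
  set n := 4 * m - 1 with hndef
  have hn : 1 ≤ n := by omega
  set v : Fin (n + 1) → ℝ := fun j => zigzagVerts m C (Fin.cast h4 j) with hvdef
  have hC' : C ⟨i.1, i.isLt⟩ = false := hC
  -- t1's parameter is past 4i
  have hs1 : ((4 * i.1 : ℕ) : ℝ) < t1 * n := by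
    by_contra hle
    push_neg at hle
    have := poly_le hn v ht1.1 ht1.2 (a := 4 * i.1) hle (fun j hj => by
      have := zig_le m C (Fin.cast h4 j) i.1 (by simpa using hj)
      simpa using this)
    linarith
  -- t2's parameter is before 4i+3
  have hs2 : t2 * n < ((4 * i.1 : ℕ) : ℝ) + 3 := by
    by_contra hle
    push_neg at hle
    have := poly_ge hn v ht2.1 ht2.2 (a := 4 * i.1 + 3)
      (by push_cast at hle ⊢; linarith) (fun j hj => by
        have := zig_ge m C (Fin.cast h4 j) i.1 (by simpa using hj)
        simpa using this)
    linarith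
  have hmono : t1 * n ≤ t2 * n :=
    mul_le_mul_of_nonneg_right h12 (by positivity)
  have ha : 4 * i.1 + 3 ≤ n := by have := i.isLt; omega
  have hvlin : ∀ j : Fin (n + 1), 4 * i.1 ≤ j.1 → j.1 ≤ 4 * i.1 + 3 →
      v j = 2 * ((i.1 : ℝ) + 1) + ((j.1 : ℝ) - ((4 * i.1 : ℕ) : ℝ)) * (2 / 3) := by
    intro j hj1 hj2
    have := zig_straight m C i.1 i.isLt hC' (Fin.cast h4 j) (by simpa using hj1)
      (by simpa using hj2)
    simpa using this
  have e1 := poly_linear hn v ht1.1 ht1.2 ha hvlin hs1.le (by linarith)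
  have e2 := poly_linear hn v ht2.1 ht2.2 ha hvlin (by linarith) hs2.le
  rw [e1] at hv1
  rw [e2] at hv2
  linarith

/-- The distance between the two gadget curves at equal time is at most `2m`. -/
lemma frechet_nonempty_mem (m : ℕ) (hm : 1 ≤ m) (h4 : 4 * m - 1 + 1 = 4 * m)
    (A B : Fin m → Bool) {t : ℝ} (ht : t ∈ Set.Icc (0:ℝ) 1) :
    dist (polyline (n := 4 * m - 1) (fun j => zigzagVerts m A (Fin.cast h4 j)) t)
      (polyline (n := 4 * m - 1) (fun j => zigzagVerts m B (Fin.cast h4 j)) t) ≤ 2 * m := by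
  set n := 4 * m - 1 with hndef
  have hn : 1 ≤ n := by omega
  have hb : ∀ (C : Fin m → Bool),
      2 ≤ polyline (n := n) (fun j => zigzagVerts m C (Fin.cast h4 j)) t ∧
      polyline (n := n) (fun j => zigzagVerts m C (Fin.cast h4 j)) t ≤ 2 * m + 2 := by
    intro C
    constructor
    · exact poly_ge hn _ ht.1 ht.2 (a := 0)
        (by simpa using mul_nonneg ht.1 (by positivity : (0:ℝ) ≤ (n:ℝ)))
        (fun j _ => (zig_global m C (Fin.cast h4 j)).1)
    · refine poly_le hn _ ht.1 ht.2 (a := n) ?_ (fun j _ => (zig_global m C _).2)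
      calc t * n ≤ 1 * n := mul_le_mul_of_nonneg_right ht.2 (by positivity)
      _ = n := one_mul _
  obtain ⟨ha1, ha2⟩ := hb A
  obtain ⟨hb1, hb2⟩ := hb B
  rw [Real.dist_eq, abs_le]
  constructor <;> linarith

lemma frechetDist_self_eq_zero (τ : ℝ → ℝ) : frechetDist τ τ = 0 := by
  have hmem : (0 : ℝ) ∈ {r : ℝ | ∃ h : ℝ → ℝ, ContinuousOn h (Set.Icc 0 1) ∧
      Set.BijOn h (Set.Icc 0 1) (Set.Icc 0 1) ∧ h 0 = 0 ∧ h 1 = 1 ∧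
      ∀ t ∈ Set.Icc (0 : ℝ) 1, dist (τ t) (τ (h t)) ≤ r} :=
    ⟨id, continuousOn_id, Set.bijOn_id _, rfl, rfl, fun t _ => by simp⟩
  have hlb : ∀ r ∈ {r : ℝ | ∃ h : ℝ → ℝ, ContinuousOn h (Set.Icc 0 1) ∧
      Set.BijOn h (Set.Icc 0 1) (Set.Icc 0 1) ∧ h 0 = 0 ∧ h 1 = 1 ∧
      ∀ t ∈ Set.Icc (0 : ℝ) 1, dist (τ t) (τ (h t)) ≤ r}, (0:ℝ) ≤ r := by
    rintro r ⟨h, _, _, _, _, hd⟩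
    have := hd 0 ⟨le_refl _, zero_le_one⟩
    exact le_trans dist_nonneg this
  exact le_antisymm (csInf_le ⟨0, hlb⟩ hmem) (le_csInf ⟨0, hmem⟩ hlb)

/-- For bit-strings `A, B` of length `m ≥ 1` and the associated
one-dimensional gadget curves `α, β` on `4m` vertices each:
(1) if `A` and `B` differ in some position, then `d_F(α, β) ≥ 1`; and
(2) if `A = B`, then `d_F(α, β) = 0`. -/
theorem equality_gadget_frechet (m : ℕ) (hm : 1 ≤ m) (A B : Fin m → Bool) :
    ((∃ i, A i ≠ B i) →
      1 ≤ frechetDist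
        (polyline (n := 4 * m - 1) (fun j => zigzagVerts m A (Fin.cast (by omega) j)))
        (polyline (n := 4 * m - 1) (fun j => zigzagVerts m B (Fin.cast (by omega) j)))) ∧
    ((∀ i, A i = B i) →
      frechetDist
        (polyline (n := 4 * m - 1) (fun j => zigzagVerts m A (Fin.cast (by omega) j)))
        (polyline (n := 4 * m - 1) (fun j => zigzagVerts m B (Fin.cast (by omega) j))) = 0) := by
  have h4 : 4 * m - 1 + 1 = 4 * m := by omega
  constructor
  · rintro ⟨i, hne⟩
    set n := 4 * m - 1 with hndef
    have hn : 1 ≤ n := by omega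
    have hnpos : (0 : ℝ) < n := by exact_mod_cast hn
    set τ := polyline (n := n) (fun j => zigzagVerts m A (Fin.cast h4 j)) with hτ
    set σ := polyline (n := n) (fun j => zigzagVerts m B (Fin.cast h4 j)) with hσ
    refine le_csInf ⟨2 * m, id, continuousOn_id, Set.bijOn_id _, rfl, rfl,
      fun t ht => frechet_nonempty_mem m hm h4 A B ht⟩ ?_
    rintro r ⟨h, hc, hbij, h0, h1e, hd⟩
    by_contra hr1
    push_neg at hr1
    -- the two instants in the differing gadget
    have hj1 : 4 * i.1 + 1 ≤ n := by have := i.isLt; omega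
    have hj2 : 4 * i.1 + 2 ≤ n := by have := i.isLt; omega
    set u1 : ℝ := ((4 * i.1 + 1 : ℕ) : ℝ) / n with hu1
    set u2 : ℝ := ((4 * i.1 + 2 : ℕ) : ℝ) / n with hu2
    have hu1mem : u1 ∈ Set.Icc (0:ℝ) 1 := by
      constructor
      · positivity
      · rw [div_le_one hnpos]; exact_mod_cast hj1
    have hu2mem : u2 ∈ Set.Icc (0:ℝ) 1 := by
      constructor
      · positivity
      · rw [div_le_one hnpos]; exact_mod_cast hj2
    have hu12 : u1 < u2 := by
      rw [hu1, hu2, div_lt_div_iff_of_pos_right hnpos]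
      exact_mod_cast Nat.lt_succ_self _
    have hmono : StrictMonoOn h (Set.Icc 0 1) :=
      hc.strictMonoOn_of_injOn_Icc zero_le_one (by rw [h0, h1e]; exact zero_le_one)
        hbij.injOn
    set b : ℝ := 2 * ((i.1 : ℝ) + 1) with hbdef
    cases hA : A i
    · -- A i = false, B i = true
      have hB : B i = true := by
        cases hBv : B i
        · rw [hA, hBv] at hne; exact (hne rfl).elim
        · rfl
      obtain ⟨t1, ht1mem, he1⟩ := hbij.surjOn hu1mem
      obtain ⟨t2, ht2mem, he2⟩ := hbij.surjOn hu2mem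
      have hσ1 : σ (h t1) = b + 2 := by
        rw [he1, hu1, hσ, poly_vertex hn _ hj1]
        exact zig_zig1 m B i.1 i.isLt hB _ rfl
      have hσ2 : σ (h t2) = b := by
        rw [he2, hu2, hσ, poly_vertex hn _ hj2]
        exact zig_zig2 m B i.1 i.isLt hB _ rfl
      have ht12 : t1 ≤ t2 := by
        by_contra hgt
        push_neg at hgt
        have := hmono ht2mem ht1mem hgt
        rw [he1, he2] at this
        linarith
      have hd1 := hd t1 ht1mem
      have hd2 := hd t2 ht2mem
      rw [Real.dist_eq, abs_le, hσ1] at hd1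
      rw [Real.dist_eq, abs_le, hσ2] at hd2
      exact frechet_core m hm h4 A i hA ht1mem ht2mem ht12
        (by linarith [hd1.1]) (by linarith [hd2.2])
    · -- A i = true, B i = false
      have hB : B i = false := by
        cases hBv : B i
        · rfl
        · rw [hA, hBv] at hne; exact (hne rfl).elim
      have hτ1 : τ u1 = b + 2 := by
        rw [hu1, hτ, poly_vertex hn _ hj1]
        exact zig_zig1 m A i.1 i.isLt hA _ rfl
      have hτ2 : τ u2 = b := by
        rw [hu2, hτ, poly_vertex hn _ hj2]
        exact zig_zig2 m A i.1 i.isLt hA _ rfl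
      have hs12 : h u1 ≤ h u2 := (hmono hu1mem hu2mem hu12).le
      have hd1 := hd u1 hu1mem
      have hd2 := hd u2 hu2mem
      rw [Real.dist_eq, abs_le, hτ1] at hd1
      rw [Real.dist_eq, abs_le, hτ2] at hd2
      exact frechet_core m hm h4 B i hB (hbij.mapsTo hu1mem) (hbij.mapsTo hu2mem) hs12
        (by linarith [hd1.1]) (by linarith [hd2.2])
  · intro hAB
    have : A = B := funext hAB
    subst this
    exact frechetDist_self_eq_zero _
end

section
/- Let d ≥ 3 and α > 0. Let p be the polygonal curve in ℝ^d that is the line segment from p₁ := (0, …, 0) to p₂ := (α, 0, …, 0), and let q be the polygonal curve with vertices q₁ := (0, 1, 0, …, 0), q₂ := (α/2, 2, 1, 0, …, 0), q₃ := (α, 1, 0, …, 0) (linearly interpolated). Then d_F(p, q) = √5; in particular, the Fréchet distance between p and q does not depend on α. -/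
noncomputable def S3 {d : ℕ} (hd : 3 ≤ d) (a b c : ℝ) : EuclideanSpace ℝ (Fin d) :=
  EuclideanSpace.single ⟨0, lt_of_lt_of_le (by norm_num) hd⟩ a + EuclideanSpace.single ⟨1, lt_of_lt_of_le (by norm_num) hd⟩ b
    + EuclideanSpace.single ⟨2, lt_of_lt_of_le (by norm_num) hd⟩ c

lemma dist_S3 {d : ℕ} (hd : 3 ≤ d) (a b c a' b' c' : ℝ) :
    dist (S3 hd a b c) (S3 hd a' b' c')
      = Real.sqrt ((a - a')^2 + (b - b')^2 + (c - c')^2) := by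
  rw [EuclideanSpace.dist_eq]
  congr 1
  have key : ∀ i : Fin d, dist (S3 hd a b c i) (S3 hd a' b' c' i) ^ 2
      = (if i = ⟨0, lt_of_lt_of_le (by norm_num) hd⟩ then (a - a')^2 else 0)
        + (if i = ⟨1, lt_of_lt_of_le (by norm_num) hd⟩ then (b - b')^2 else 0)
        + (if i = ⟨2, lt_of_lt_of_le (by norm_num) hd⟩ then (c - c')^2 else 0) := by
    intro i
    simp only [S3, PiLp.add_apply, EuclideanSpace.single_apply, Real.dist_eq]
    rw [sq_abs]
    split_ifs <;> simp_all [Fin.ext_iff] <;> ring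
  simp [key, Finset.sum_add_distrib]

lemma S3_add {d : ℕ} (hd : 3 ≤ d) (a b c a' b' c' : ℝ) :
    S3 hd a b c + S3 hd a' b' c' = S3 hd (a+a') (b+b') (c+c') := by
  ext i
  simp [S3, EuclideanSpace.single_apply]
  split_ifs <;> ring

lemma S3_sub {d : ℕ} (hd : 3 ≤ d) (a b c a' b' c' : ℝ) :
    S3 hd a b c - S3 hd a' b' c' = S3 hd (a-a') (b-b') (c-c') := by
  ext i
  simp [S3, EuclideanSpace.single_apply]
  split_ifs <;> ring

lemma S3_smul {d : ℕ} (hd : 3 ≤ d) (r a b c : ℝ) :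
    r • S3 hd a b c = S3 hd (r*a) (r*b) (r*c) := by
  ext i
  simp [S3, EuclideanSpace.single_apply]

lemma single0 {d : ℕ} (hd : 3 ≤ d) (a : ℝ) :
    EuclideanSpace.single (⟨0, lt_of_lt_of_le (by norm_num) hd⟩ : Fin d) a = S3 hd a 0 0 := by
  ext i; simp [S3, EuclideanSpace.single_apply]

lemma single1 {d : ℕ} (hd : 3 ≤ d) (b : ℝ) :
    EuclideanSpace.single (⟨1, lt_of_lt_of_le (by norm_num) hd⟩ : Fin d) b = S3 hd 0 b 0 := by
  ext i; simp [S3, EuclideanSpace.single_apply]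

lemma zeroS3 {d : ℕ} (hd : 3 ≤ d) :
    (0 : EuclideanSpace ℝ (Fin d)) = S3 hd 0 0 0 := by
  ext i; simp [S3, EuclideanSpace.single_apply]

/-- In `ℝ^d` with `d ≥ 3` and any `α > 0`, let `p` be the segment from
`p₁ = (0,…,0)` to `p₂ = (α,0,…,0)` and let `q` be the polygonal curve with vertices
`q₁ = (0,1,0,…,0)`, `q₂ = (α/2,2,1,0,…,0)`, `q₃ = (α,1,0,…,0)`. Then `d_F(p,q) = √5`;
in particular the Fréchet distance does not depend on `α`. -/
theorem additive_error_example {d : ℕ} (hd : 3 ≤ d) (α : ℝ) (hα : 0 < α) :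
    frechetDist
      (polyline ![(0 : EuclideanSpace ℝ (Fin d)),
        EuclideanSpace.single ⟨0, by omega⟩ α])
      (polyline ![EuclideanSpace.single ⟨1, by omega⟩ (1 : ℝ),
        EuclideanSpace.single ⟨0, by omega⟩ (α / 2) + EuclideanSpace.single ⟨1, by omega⟩ 2
          + EuclideanSpace.single ⟨2, by omega⟩ 1,
        EuclideanSpace.single ⟨0, by omega⟩ α + EuclideanSpace.single ⟨1, by omega⟩ 1])
      = Real.sqrt 5 := by
  set P : ℝ → EuclideanSpace ℝ (Fin d) :=
    polyline ![(0 : EuclideanSpace ℝ (Fin d)), EuclideanSpace.single ⟨0, by omega⟩ α] with hP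
  set Q : ℝ → EuclideanSpace ℝ (Fin d) :=
    polyline ![EuclideanSpace.single ⟨1, by omega⟩ (1 : ℝ),
        EuclideanSpace.single ⟨0, by omega⟩ (α / 2) + EuclideanSpace.single ⟨1, by omega⟩ 2
          + EuclideanSpace.single ⟨2, by omega⟩ 1,
        EuclideanSpace.single ⟨0, by omega⟩ α + EuclideanSpace.single ⟨1, by omega⟩ 1] with hQ
  have hq2 : EuclideanSpace.single (⟨0, by omega⟩ : Fin d) (α / 2)
      + EuclideanSpace.single ⟨1, by omega⟩ 2 + EuclideanSpace.single ⟨2, by omega⟩ 1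
      = S3 hd (α/2) 2 1 := rfl
  have hq3 : EuclideanSpace.single (⟨0, by omega⟩ : Fin d) α
      + EuclideanSpace.single ⟨1, by omega⟩ 1 = S3 hd α 1 0 := by
    rw [single0 hd, single1 hd, S3_add]; norm_num
  have hp : ∀ t : ℝ, P t = S3 hd (t*α) 0 0 := by
    intro t
    have e : P t = (0 : EuclideanSpace ℝ (Fin d))
        + t • (EuclideanSpace.single ⟨0, by omega⟩ α - 0) := by
      rw [hP]; simp [polyline]
    rw [e, zeroS3 hd, single0 hd, S3_sub, S3_smul, S3_add]
    congr 1 <;> ring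
  have hqL : ∀ t : ℝ, t < 1/2 → Q t = S3 hd (t*α) (1+2*t) (2*t) := by
    intro t ht
    have h0 : ⌊t * 2⌋₊ = 0 := Nat.floor_eq_zero.mpr (by linarith)
    have e : Q t = EuclideanSpace.single ⟨1, by omega⟩ 1
        + (t*2) • (S3 hd (α/2) 2 1 - EuclideanSpace.single ⟨1, by omega⟩ 1) := by
      rw [hQ]; simp [polyline, show (1:ℝ)+1 = 2 by norm_num, h0, hq2]
    rw [e, single1 hd, S3_sub, S3_smul, S3_add]
    congr 1 <;> ring
  have hqR : ∀ t : ℝ, 1/2 ≤ t → Q t = S3 hd (t*α) (3-2*t) (2-2*t) := by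
    intro t ht
    have h1 : ⌊t * 2⌋₊ ⊓ 1 = 1 := min_eq_right (Nat.le_floor (by push_cast; linarith))
    have e : Q t = S3 hd (α/2) 2 1 + (t*2 - 1) • (S3 hd α 1 0 - S3 hd (α/2) 2 1) := by
      rw [hQ]; simp [polyline, show (1:ℝ)+1 = 2 by norm_num, h1, hq2, hq3]
    rw [e, S3_sub, S3_smul, S3_add]
    congr 1 <;> ring
  have hmem : Real.sqrt 5 ∈ {r : ℝ | ∃ h : ℝ → ℝ, ContinuousOn h (Set.Icc 0 1) ∧
      Set.BijOn h (Set.Icc 0 1) (Set.Icc 0 1) ∧ h 0 = 0 ∧ h 1 = 1 ∧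
      ∀ t ∈ Set.Icc (0 : ℝ) 1, dist (P t) (Q (h t)) ≤ r} := by
    refine ⟨id, continuousOn_id, Set.bijOn_id _, rfl, rfl, ?_⟩
    intro t ht
    simp only [id]
    rcases lt_or_ge t (1/2) with h | h
    · rw [hp t, hqL t h, dist_S3]
      apply Real.sqrt_le_sqrt
      nlinarith [ht.1, sq_nonneg t]
    · rw [hp t, hqR t h, dist_S3]
      apply Real.sqrt_le_sqrt
      nlinarith [ht.2]
  have hlb : ∀ r ∈ {r : ℝ | ∃ h : ℝ → ℝ, ContinuousOn h (Set.Icc 0 1) ∧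
      Set.BijOn h (Set.Icc 0 1) (Set.Icc 0 1) ∧ h 0 = 0 ∧ h 1 = 1 ∧
      ∀ t ∈ Set.Icc (0 : ℝ) 1, dist (P t) (Q (h t)) ≤ r}, Real.sqrt 5 ≤ r := by
    rintro r ⟨h, -, hbij, -, -, hb⟩
    obtain ⟨t₀, ht₀, hht₀⟩ := hbij.surjOn (show (1/2 : ℝ) ∈ Set.Icc (0:ℝ) 1 by norm_num)
    have hdist := hb t₀ ht₀
    rw [hht₀, hp t₀, hqR (1/2) le_rfl, dist_S3] at hdist
    refine le_trans ?_ hdist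
    apply Real.sqrt_le_sqrt
    nlinarith [sq_nonneg (t₀*α - 1/2*α)]
  rw [frechetDist]
  exact le_antisymm (csInf_le ⟨Real.sqrt 5, hlb⟩ hmem) (le_csInf ⟨_, hmem⟩ hlb)
end
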